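/- Let X be a connected open subset of the complexification E_C = E + iE of a real Banach space E, with X ∩ E nonempty, and let A : X → L(E₁,F₁) be analytic with A(z) Fredholm for all z. If A(z₀) is injective for some z₀ ∈ X ∩ E and the non-injectivity set of A is a proper analytic subset of X, then the non-injectivity set within X ∩ E cannot contain an open subset of E; that is, the set of z ∈ X ∩ E where A(z) is injective is dense in X ∩ E. -/

import Mathlib

/-- `S` is an analytic subset of `X`, proper: locally the common zero set of a family of
analytic functions, at least one of which is not identically zero. -/
def IsProperAnalyticSubset {Z : Type*} [NormedAddCommGroup Z] [NormedSpace ℂ Z]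
    (X S : Set Z) : Prop :=
  ∀ x ∈ X, ∃ U : Set Z, IsOpen U ∧ x ∈ U ∧ U ⊆ X ∧
    ∃ (ι : Type) (f : ι → Z → ℂ), (∀ i, AnalyticOnNhd ℂ (f i) U) ∧
      S ∩ U = {z ∈ U | ∀ i, f i z = 0} ∧ ∃ i, ∃ z ∈ U, f i z ≠ 0

/-- A bounded operator between Banach spaces is Fredholm. -/
def IsFredholmOp {E F : Type*} [NormedAddCommGroup E] [NormedSpace ℂ E]
    [NormedAddCommGroup F] [NormedSpace ℂ F] (A : E →L[ℂ] F) : Prop :=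
  IsClosed (LinearMap.range (A : E →ₗ[ℂ] F) : Set F) ∧ FiniteDimensional ℂ (LinearMap.ker (A : E →ₗ[ℂ] F)) ∧
    FiniteDimensional ℂ (F ⧸ LinearMap.range (A : E →ₗ[ℂ] F))

/-! If the non-injectivity set `S` contained all real points near `ι x`, each local defining
function `g` of `S` would vanish on a complex neighbourhood of `ι x`: every homogeneous term
`w ↦ pₙ(w, …, w)` of the power series of `g` at `ι x` vanishes on `ι E` (restrict `g` to the
complex lines through `ι x` in real directions), hence on `Z = ι E + i ι E` (restrict it to the
lines `s ↦ ι u + s ι v`). So `ι x` is an interior point of `S`. By the identity theorem the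
interior of an analytic subset is relatively closed, so connectedness of `X` forces `S = X`,
contradicting injectivity at `ι x₀`. -/

open Filter Topology Set

section RealPoints

variable {E Z F : Type*} [NormedAddCommGroup E] [NormedSpace ℝ E]
  [NormedAddCommGroup Z] [NormedSpace ℂ Z] [NormedAddCommGroup F] [NormedSpace ℂ F]

theorem AnalyticAt.eventuallyEq_zero_of_eventually_ofReal {g : ℂ → F} {a : ℝ}
    (hg : AnalyticAt ℂ g a) (h : ∀ᶠ s : ℝ in 𝓝 a, g s = 0) : g =ᶠ[𝓝 (a : ℂ)] 0 := by
  have hreal : Tendsto ((↑) : ℝ → ℂ) (𝓝[≠] a) (𝓝[≠] (a : ℂ)) :=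
    Complex.continuous_ofReal.continuousWithinAt.tendsto_nhdsWithin
      fun s hs => Complex.ofReal_injective.ne hs
  exact hg.frequently_zero_iff_eventually_zero.mp
    (hreal.frequently (h.filter_mono nhdsWithin_le_nhds).frequently)

theorem eq_zero_of_forall_realForm {P : Z → F} (ι : E →ₗ[ℝ] Z)
    (hdecomp : ∀ z : Z, ∃ x y : E, z = ι x + Complex.I • ι y)
    (hP : AnalyticOnNhd ℂ P univ) (h : ∀ x, P (ι x) = 0) (z : Z) : P z = 0 := by
  obtain ⟨x, y, rfl⟩ := hdecomp z
  -- `g` is entire and vanishes on `ℝ`, so it vanishes at `s = I`.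
  set g : ℂ → F := fun s => P (ι x + s • ι y)
  have hg : AnalyticOnNhd ℂ g univ := fun s _ =>
    (hP _ trivial).comp
      (analyticAt_const.add ((ContinuousLinearMap.toSpanSingleton ℂ (ι y)).analyticAt s))
  have hg_real : ∀ s : ℝ, g s = 0 := fun s => by
    simpa only [g, Complex.coe_smul, ← map_smul, ← map_add] using h (x + s • y)
  have hg0 : g =ᶠ[𝓝 ((0 : ℝ) : ℂ)] 0 :=
    (hg _ trivial).eventuallyEq_zero_of_eventually_ofReal (Eventually.of_forall hg_real)
  exact hg.eqOn_zero_of_preconnected_of_eventuallyEq_zero isPreconnected_univ trivial hg0 trivial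

theorem HasFPowerSeriesAt.apply_realForm_eq_zero {f : Z → F} {p : FormalMultilinearSeries ℂ Z F}
    (ι : E →ₗ[ℝ] Z) {x : E} (hp : HasFPowerSeriesAt f p (ι x))
    (h : ∀ᶠ x' in 𝓝 x, f (ι x') = 0) (n : ℕ) (u : E) : p n (fun _ => ι u) = 0 := by
  -- On the complex line `ι x + ℂ • ι u` the series of `f` is `∑ p n (ι u, …, ι u) tⁿ`, and
  -- `f` vanishes on its real points.
  set L := ContinuousLinearMap.toSpanSingleton ℂ (ι u)
  have hshift : HasFPowerSeriesAt (fun y => f (y + ι x)) p (L 0) := by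
    simpa using hp.comp_sub (-ι x)
  have hline : HasFPowerSeriesAt ((fun y => f (y + ι x)) ∘ L) (p.compContinuousLinearMap L) 0 :=
    hshift.compContinuousLinearMap
  have hline_real : ∀ᶠ s : ℝ in 𝓝 0, ((fun y => f (y + ι x)) ∘ L) s = 0 := by
    have hx : Tendsto (fun s : ℝ => x + s • u) (𝓝 0) (𝓝 x) := by
      simpa using (Continuous.tendsto (by fun_prop : Continuous fun s : ℝ => x + s • u) 0)
    filter_upwards [hx.eventually h] with s hs
    simpa [L, Complex.coe_smul, add_comm] using hs
  have hzero : (fun y => f (y + ι x)) ∘ L =ᶠ[𝓝 0] 0 := by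
    simpa using hline.analyticAt.eventuallyEq_zero_of_eventually_ofReal (a := 0)
      (by simpa using hline_real)
  have := (hline.congr hzero).apply_eq_zero n 1
  rw [FormalMultilinearSeries.compContinuousLinearMap_apply] at this
  simpa [L, Function.comp_def] using this

theorem AnalyticAt.eventuallyEq_zero_of_eventually_realForm {f : Z → F} (ι : E →ₗ[ℝ] Z)
    (hdecomp : ∀ z : Z, ∃ x y : E, z = ι x + Complex.I • ι y) {x : E}
    (hf : AnalyticAt ℂ f (ι x)) (h : ∀ᶠ x' in 𝓝 x, f (ι x') = 0) : f =ᶠ[𝓝 (ι x)] 0 := by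
  obtain ⟨p, hp⟩ := hf
  have hcoeff : ∀ n y, p n (fun _ => y) = 0 := by
    intro n
    have hdiag : AnalyticOnNhd ℂ (fun y : Z => p n (fun _ => y)) univ := fun y _ =>
      (p n).analyticAt.comp (AnalyticAt.pi fun _ => analyticAt_id)
    exact eq_zero_of_forall_realForm ι hdecomp hdiag (hp.apply_realForm_eq_zero ι h n)
  filter_upwards [hp.eventually_hasSum_sub] with z hz
  simp only [hcoeff] at hz
  exact hz.unique hasSum_zero

end RealPoints

section AnalyticSubset

variable {Z : Type*} [NormedAddCommGroup Z] [NormedSpace ℂ Z]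

def IsAnalyticSubset (X S : Set Z) : Prop :=
  ∀ x ∈ X, ∃ U : Set Z, IsOpen U ∧ x ∈ U ∧ U ⊆ X ∧
    ∃ (ι : Type) (f : ι → Z → ℂ), (∀ i, AnalyticOnNhd ℂ (f i) U) ∧
      S ∩ U = {z ∈ U | ∀ i, f i z = 0}

theorem IsProperAnalyticSubset.isAnalyticSubset {X S : Set Z}
    (h : IsProperAnalyticSubset X S) : IsAnalyticSubset X S := fun x hx =>
  let ⟨U, hU, hxU, hUX, κ, f, hf, hSU, _⟩ := h x hx
  ⟨U, hU, hxU, hUX, κ, f, hf, hSU⟩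

theorem subset_of_forall_eventuallyEq_zero {κ : Type*} {f : κ → Z → ℂ} {S U V : Set Z}
    (hf : ∀ i, AnalyticOnNhd ℂ (f i) U) (hSU : S ∩ U = {z ∈ U | ∀ i, f i z = 0})
    (hV : IsPreconnected V) (hVU : V ⊆ U) {w : Z} (hw : w ∈ V) (h : ∀ i, f i =ᶠ[𝓝 w] 0) :
    V ⊆ S := by
  intro z hz
  have hzS : z ∈ S ∩ U := by
    rw [hSU]
    exact ⟨hVU hz, fun i =>
      ((hf i).mono hVU).eqOn_zero_of_preconnected_of_eventuallyEq_zero hV hw (h i) hz⟩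
  exact hzS.1

variable {X S : Set Z}

theorem IsAnalyticSubset.closure_interior_inter_subset (hS : IsAnalyticSubset X S) :
    closure (interior S) ∩ X ⊆ interior S := by
  rintro z ⟨hz, hzX⟩
  obtain ⟨U, hU, hzU, -, κ, f, hf, hSU⟩ := hS z hzX
  obtain ⟨ρ, hρ, hball⟩ := Metric.isOpen_iff.mp hU z hzU
  obtain ⟨w, hw, hwS⟩ := mem_closure_iff.mp hz _ Metric.isOpen_ball (Metric.mem_ball_self hρ)
  have hf0 : ∀ i, f i =ᶠ[𝓝 w] 0 := fun i => by
    filter_upwards [isOpen_interior.mem_nhds hwS, hU.mem_nhds (hball hw)] with y hyS hyU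
    have hy : y ∈ S ∩ U := ⟨interior_subset hyS, hyU⟩
    rw [hSU] at hy
    exact hy.2 i
  exact mem_interior_iff_mem_nhds.mpr <| mem_of_superset (Metric.ball_mem_nhds z hρ) <|
    subset_of_forall_eventuallyEq_zero hf hSU (convex_ball z ρ).isPreconnected hball hw hf0

theorem IsAnalyticSubset.subset_of_mem_interior (hS : IsAnalyticSubset X S)
    (hX : IsPreconnected X) {z : Z} (hzX : z ∈ X) (hzS : z ∈ interior S) : X ⊆ S :=
  (hX.subset_of_closure_inter_subset isOpen_interior ⟨z, hzX, hzS⟩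
    hS.closure_interior_inter_subset).trans interior_subset

theorem IsAnalyticSubset.mem_interior_of_eventually_realForm {E : Type*}
    [NormedAddCommGroup E] [NormedSpace ℝ E] (hS : IsAnalyticSubset X S) (ι : E →L[ℝ] Z)
    (hdecomp : ∀ z : Z, ∃ x y : E, z = ι x + Complex.I • ι y) {x : E} (hx : ι x ∈ X)
    (h : ∀ᶠ x' in 𝓝 x, ι x' ∈ S) : ι x ∈ interior S := by
  obtain ⟨U, hU, hxU, -, κ, f, hf, hSU⟩ := hS _ hx
  obtain ⟨ρ, hρ, hball⟩ := Metric.isOpen_iff.mp hU _ hxU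
  have hf0 : ∀ i, f i =ᶠ[𝓝 (ι x)] 0 := fun i => by
    refine (hf i _ hxU).eventuallyEq_zero_of_eventually_realForm (ι : E →ₗ[ℝ] Z) hdecomp ?_
    filter_upwards [h, ι.continuous.tendsto x |>.eventually (hU.mem_nhds hxU)] with x' hx'S hx'U
    have hx' : ι x' ∈ S ∩ U := ⟨hx'S, hx'U⟩
    rw [hSU] at hx'
    exact hx'.2 i
  exact mem_interior_iff_mem_nhds.mpr <| mem_of_superset (Metric.ball_mem_nhds _ hρ) <|
    subset_of_forall_eventuallyEq_zero hf hSU (convex_ball _ ρ).isPreconnected hball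
      (Metric.mem_ball_self hρ) hf0

end AnalyticSubset

theorem generic_injectivity_real_points_general
    {E Z E₁ F₁ : Type*} [NormedAddCommGroup E] [NormedSpace ℝ E]
    [NormedAddCommGroup Z] [NormedSpace ℂ Z]
    [NormedAddCommGroup E₁] [NormedSpace ℂ E₁]
    [NormedAddCommGroup F₁] [NormedSpace ℂ F₁]
    (ι : E →L[ℝ] Z)
    (hdecomp : ∀ z : Z, ∃ x y : E, z = ι x + Complex.I • ι y)
    (X : Set Z) (hXopen : IsOpen X) (hXconn : IsConnected X)
    (A : Z → E₁ →L[ℂ] F₁)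
    (x₀ : E) (hx₀ : ι x₀ ∈ X) (hinj₀ : Function.Injective (A (ι x₀)))
    (hproper : IsProperAnalyticSubset X {z ∈ X | ¬ Function.Injective (A z)}) :
    ∀ x : E, ι x ∈ X → ∀ ε > 0, ∃ x' : E, ‖x' - x‖ < ε ∧ ι x' ∈ X ∧
      Function.Injective (A (ι x')) := by
  intro x hx ε hε
  by_contra! hcon
  set S := {z ∈ X | ¬ Function.Injective (A z)}
  have hS : IsAnalyticSubset X S := hproper.isAnalyticSubset
  have hreal : ∀ᶠ x' in 𝓝 x, ι x' ∈ S := by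
    filter_upwards [Metric.ball_mem_nhds x hε, (hXopen.preimage ι.continuous).mem_nhds hx]
      with x' hx'ε hx'X
    exact ⟨hx'X, hcon x' (by rwa [← dist_eq_norm]) hx'X⟩
  have hint : ι x ∈ interior S := hS.mem_interior_of_eventually_realForm ι hdecomp hx hreal
  exact (hS.subset_of_mem_interior hXconn.isPreconnected hx hint hx₀).2 hinj₀

/-- Real version of generic injectivity: `Z = E + iE` is the complexification of the real
Banach space `E` (realized via a real-linear embedding `ι` with `Z = ι E ⊕ i·ι E`),
`X ⊆ Z` is connected open meeting `E`, and `A` is an analytic Fredholm-valued map whose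
non-injectivity set is a proper analytic subset of `X`.  If `A` is injective at some real
point, then the points of `X ∩ E` where `A` is injective are dense in `X ∩ E`. -/
theorem generic_injectivity_real_points
    {E Z E₁ F₁ : Type*} [NormedAddCommGroup E] [NormedSpace ℝ E]
    [NormedAddCommGroup Z] [NormedSpace ℂ Z]
    [NormedAddCommGroup E₁] [NormedSpace ℂ E₁] [CompleteSpace E₁]
    [NormedAddCommGroup F₁] [NormedSpace ℂ F₁] [CompleteSpace F₁]
    (ι : E →L[ℝ] Z)
    (hdecomp : ∀ z : Z, ∃ x y : E, z = ι x + Complex.I • ι y)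
    (hindep : ∀ x y : E, ι x + Complex.I • ι y = 0 → x = 0 ∧ y = 0)
    (X : Set Z) (hXopen : IsOpen X) (hXconn : IsConnected X)
    (hXreal : ∃ x : E, ι x ∈ X)
    (A : Z → E₁ →L[ℂ] F₁) (hA : AnalyticOnNhd ℂ A X)
    (hFred : ∀ z ∈ X, IsFredholmOp (A z))
    (x₀ : E) (hx₀ : ι x₀ ∈ X) (hinj₀ : Function.Injective (A (ι x₀)))
    (hproper : IsProperAnalyticSubset X {z ∈ X | ¬ Function.Injective (A z)}) :
    ∀ x : E, ι x ∈ X → ∀ ε > 0, ∃ x' : E, ‖x' - x‖ < ε ∧ ι x' ∈ X ∧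
      Function.Injective (A (ι x')) :=
  generic_injectivity_real_points_general ι hdecomp X hXopen hXconn A x₀ hx₀ hinj₀ hproper
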